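/- arXiv:2111.09080 — 5 statements merged into one kernel-verified Lean document; each statement's English description precedes it below -/
import Mathlib

section
/- Let A be a weak based ring of finite rank with basis {b_i}, and let b = Σ_i b_i. If f : A → C is a homomorphism of weak based Z₊-rings into a weak based ring C of finite rank |J| with basis {d_j}, write f(b) = Σ_j g^j d_j. Then each coefficient g^j is bounded by |J|·N, where N is the maximum coefficient appearing in the expansion of b² in the basis of A. Consequently, the set of homomorphisms of weak based Z₊-rings between two weak based rings of finite rank is finite. -/
open Finset

/-- A weak based ring of finite rank, presented by its structure constants on a finite basis
`{b_i}_{i ∈ I}`: `b_i b_j = ∑_l (c i j l) b_l`, `1 = ∑_i (a i) b_i`, with an involution `inv`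
of `I` inducing an anti-involution, and `τ(b_i b_j) > 0` iff `j = i*`, where `τ(b_l) = 1` iff
`b_l` occurs in `1`. -/
structure WeakBasedRing (I : Type) [Fintype I] [DecidableEq I] where
  c : I → I → I → ℕ
  a : I → ℕ
  inv : I → I
  inv_inv : ∀ i, inv (inv i) = i
  one_mul : ∀ j l, (∑ i, a i * c i j l) = if j = l then 1 else 0
  mul_one : ∀ j l, (∑ i, a i * c j i l) = if j = l then 1 else 0
  assoc : ∀ i j l m, (∑ x, c i j x * c x l m) = (∑ x, c j l x * c i x m)
  anti : ∀ i j l, c (inv j) (inv i) (inv l) = c i j l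
  tau_pos : ∀ i, 0 < ∑ l, c i (inv i) l * (if a l ≠ 0 then 1 else 0)
  tau_zero : ∀ i j, j ≠ inv i → (∑ l, c i j l * (if a l ≠ 0 then 1 else 0)) = 0

/-- A homomorphism of weak based rings, given by the nonnegative integer matrix `g` with
`f(b_i) = ∑_j (g i j) d_j`: it preserves the unit, the multiplication, and the involution. -/
def WeakBasedRing.IsHom {I J : Type} [Fintype I] [DecidableEq I] [Fintype J] [DecidableEq J]
    (A : WeakBasedRing I) (C : WeakBasedRing J) (g : I → J → ℕ) : Prop :=
  (∀ j, (∑ i, A.a i * g i j) = C.a j) ∧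
  (∀ i i' j, (∑ l, A.c i i' l * g l j) = ∑ j1, ∑ j2, g i j1 * g i' j2 * C.c j1 j2 j) ∧
  (∀ i j, g (A.inv i) j = g i (C.inv j))

/-- For a homomorphism `f : A → C` of weak based rings of finite rank, writing
`f(b) = ∑_j g^j d_j` where `b = ∑_i b_i`, each coefficient `g^j = ∑_i g i j` is bounded by
`|J| · N`, with `N` the largest coefficient in the expansion of `b²` in the basis of `A`.
Consequently, the set of homomorphisms of weak based rings between two weak based rings of
finite rank is finite. -/
theorem stmt_0 {I J : Type} [Fintype I] [DecidableEq I] [Fintype J] [DecidableEq J]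
    (A : WeakBasedRing I) (C : WeakBasedRing J) :
    (∀ g : I → J → ℕ, A.IsHom C g → ∀ j,
      (∑ i, g i j) ≤ Fintype.card J * (univ.sup fun l => ∑ i1, ∑ i2, A.c i1 i2 l)) ∧
    {g : I → J → ℕ | A.IsHom C g}.Finite := by
  have key : ∀ g : I → J → ℕ, A.IsHom C g → ∀ j,
      (∑ i, g i j) ≤ Fintype.card J * (univ.sup fun l => ∑ i1, ∑ i2, A.c i1 i2 l) := by
    intro g hg j
    obtain ⟨h1, h2, h3⟩ := hg
    set N := (univ.sup fun l => ∑ i1, ∑ i2, A.c i1 i2 l) with hN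
    set G : J → ℕ := fun j => ∑ i, g i j with hG
    have hGinv : ∀ j, G (C.inv j) = G j := by
      intro j
      calc G (C.inv j) = ∑ i, g (A.inv i) j :=
            Finset.sum_congr rfl fun i _ => (h3 i j).symm
        _ = ∑ i, g i j :=
            Fintype.sum_bijective A.inv (Function.Involutive.bijective A.inv_inv)
              _ _ (fun i => rfl)
    have swap4 : ∀ (F : I → I → J → J → ℕ),
        (∑ j1, ∑ j2, ∑ i, ∑ i', F i i' j1 j2) = ∑ i, ∑ i', ∑ j1, ∑ j2, F i i' j1 j2 := by
      intro F
      calc (∑ j1, ∑ j2, ∑ i, ∑ i', F i i' j1 j2)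
          = ∑ j1, ∑ i, ∑ j2, ∑ i', F i i' j1 j2 :=
            Finset.sum_congr rfl fun j1 _ => Finset.sum_comm
        _ = ∑ i, ∑ j1, ∑ j2, ∑ i', F i i' j1 j2 := Finset.sum_comm
        _ = ∑ i, ∑ j1, ∑ i', ∑ j2, F i i' j1 j2 :=
            Finset.sum_congr rfl fun i _ => Finset.sum_congr rfl fun j1 _ =>
              Finset.sum_comm
        _ = ∑ i, ∑ i', ∑ j1, ∑ j2, F i i' j1 j2 :=
            Finset.sum_congr rfl fun i _ => Finset.sum_comm
    have keyid : ∀ m, (∑ j1, ∑ j2, G j1 * G j2 * C.c j1 j2 m)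
        = ∑ l, (∑ i1, ∑ i2, A.c i1 i2 l) * g l m := by
      intro m
      calc ∑ j1, ∑ j2, G j1 * G j2 * C.c j1 j2 m
          = ∑ j1, ∑ j2, ∑ i, ∑ i', g i j1 * g i' j2 * C.c j1 j2 m := by
            refine Finset.sum_congr rfl fun j1 _ => Finset.sum_congr rfl fun j2 _ => ?_
            simp only [hG, Finset.sum_mul, Finset.mul_sum]
            exact Finset.sum_comm
        _ = ∑ i, ∑ i', ∑ j1, ∑ j2, g i j1 * g i' j2 * C.c j1 j2 m :=
            swap4 fun i i' j1 j2 => g i j1 * g i' j2 * C.c j1 j2 m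
        _ = ∑ i, ∑ i', ∑ l, A.c i i' l * g l m :=
            Finset.sum_congr rfl fun i _ => Finset.sum_congr rfl fun i' _ => (h2 i i' m).symm
        _ = ∑ i, ∑ l, ∑ i', A.c i i' l * g l m :=
            Finset.sum_congr rfl fun i _ => Finset.sum_comm
        _ = ∑ l, ∑ i, ∑ i', A.c i i' l * g l m := Finset.sum_comm
        _ = ∑ l, (∑ i1, ∑ i2, A.c i1 i2 l) * g l m := by
            refine Finset.sum_congr rfl fun l _ => ?_
            rw [Finset.sum_mul]
            exact Finset.sum_congr rfl fun i _ => (Finset.sum_mul _ _ _).symm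
    have main : ∀ j, G j * G j ≤ N * ∑ m, G m := by
      intro j
      have h4 : 1 ≤ ∑ m, C.c j (C.inv j) m := by
        have := C.tau_pos j
        have hle : (∑ l, C.c j (C.inv j) l * (if C.a l ≠ 0 then 1 else 0))
            ≤ ∑ m, C.c j (C.inv j) m :=
          Finset.sum_le_sum fun m _ => by split <;> simp
        omega
      calc G j * G j = G j * G (C.inv j) * 1 := by rw [hGinv, mul_one]
        _ ≤ G j * G (C.inv j) * ∑ m, C.c j (C.inv j) m := Nat.mul_le_mul_left _ h4
        _ = ∑ m, G j * G (C.inv j) * C.c j (C.inv j) m := by rw [Finset.mul_sum]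
        _ ≤ ∑ m, ∑ j1, ∑ j2, G j1 * G j2 * C.c j1 j2 m := by
            refine Finset.sum_le_sum fun m _ => ?_
            calc G j * G (C.inv j) * C.c j (C.inv j) m
                ≤ ∑ j2, G j * G j2 * C.c j j2 m :=
                  Finset.single_le_sum (f := fun j2 => G j * G j2 * C.c j j2 m)
                    (fun _ _ => Nat.zero_le _) (Finset.mem_univ (C.inv j))
              _ ≤ ∑ j1, ∑ j2, G j1 * G j2 * C.c j1 j2 m :=
                  Finset.single_le_sum (f := fun j1 => ∑ j2, G j1 * G j2 * C.c j1 j2 m)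
                    (fun _ _ => Nat.zero_le _) (Finset.mem_univ j)
        _ = ∑ m, ∑ l, (∑ i1, ∑ i2, A.c i1 i2 l) * g l m :=
            Finset.sum_congr rfl fun m _ => keyid m
        _ ≤ ∑ m, ∑ l, N * g l m := by
            refine Finset.sum_le_sum fun m _ => Finset.sum_le_sum fun l _ => ?_
            exact Nat.mul_le_mul_right _
              (Finset.le_sup (f := fun l => ∑ i1, ∑ i2, A.c i1 i2 l) (Finset.mem_univ l))
        _ = N * ∑ m, G m := by
            simp only [hG, ← Finset.mul_sum]
    obtain ⟨j0, -, hj0⟩ := Finset.exists_max_image (univ : Finset J) G ⟨j, Finset.mem_univ j⟩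
    have hsum : (∑ m, G m) ≤ Fintype.card J * G j0 := by
      calc (∑ m, G m) ≤ ∑ _m : J, G j0 :=
            Finset.sum_le_sum fun m _ => hj0 m (Finset.mem_univ m)
        _ = Fintype.card J * G j0 := by simp [Finset.card_univ, mul_comm]
    have hj0le : G j0 ≤ Fintype.card J * N := by
      rcases Nat.eq_zero_or_pos (G j0) with h0 | h0
      · simp [h0]
      · have : G j0 * G j0 ≤ (Fintype.card J * N) * G j0 := by
          calc G j0 * G j0 ≤ N * ∑ m, G m := main j0
            _ ≤ N * (Fintype.card J * G j0) := Nat.mul_le_mul_left _ hsum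
            _ = (Fintype.card J * N) * G j0 := by ring
        exact Nat.le_of_mul_le_mul_right this h0
    exact le_trans (hj0 j (Finset.mem_univ j)) hj0le
  refine ⟨key, ?_⟩
  set N := (univ.sup fun l => ∑ i1, ∑ i2, A.c i1 i2 l) with hN
  apply Set.Finite.subset (Set.finite_Icc (0 : I → J → ℕ)
    (fun _ _ => Fintype.card J * N))
  intro g hg
  refine Set.mem_Icc.mpr ⟨fun i j => Nat.zero_le _, fun i j => ?_⟩
  calc g i j ≤ ∑ i', g i' j :=
        Finset.single_le_sum (f := fun i' => g i' j) (fun _ _ => Nat.zero_le _)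
          (Finset.mem_univ i)
    _ ≤ Fintype.card J * N := key g hg j
end

section
/- Let A be a weak based ring of finite rank. Then every irreducible Z₊-module over A has rank bounded by N, where N is the maximum coefficient in the expansion of b² (with b the sum of all basis elements of A), and there are only finitely many equivalence classes of irreducible Z₊-modules over A. -/
open Finset

/-- A `ℤ₊`-module over a weak based ring `A`, presented by its structure constants on a finite
basis `{m_l}_{l ∈ L}`: `m_l · b_i = ∑_x (f l i x) m_x`. -/
structure ZPlusModule {I : Type} [Fintype I] [DecidableEq I] (A : WeakBasedRing I)
    (L : Type) [Fintype L] [DecidableEq L] where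
  f : L → I → L → ℕ
  unit : ∀ l m, (∑ i, A.a i * f l i m) = if l = m then 1 else 0
  assoc : ∀ l i j m, (∑ x, f l i x * f x j m) = (∑ x, A.c i j x * f l x m)

/-- A `ℤ₊`-module is irreducible if no proper nonempty subset of its basis spans an
`A`-submodule. -/
def ZPlusModule.Irreducible {I : Type} [Fintype I] [DecidableEq I] {A : WeakBasedRing I}
    {L : Type} [Fintype L] [DecidableEq L] (M : ZPlusModule A L) : Prop :=
  ∀ S : Finset L, S.Nonempty → (∀ l ∈ S, ∀ i x, M.f l i x ≠ 0 → x ∈ S) → S = univ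

/-!
Let `B` be the matrix of right multiplication by `b = ∑ i, b_i` on an irreducible `ℤ₊`-module.
Irreducibility makes every entry of `B` positive, and `b² = ∑ t, N_t b_t` with `N_t ≤ N` gives
`B² ≤ N • B` entrywise. Comparing both sides at a minimal entry of `B` bounds the rank by `N`,
and `B l m ≤ (B²) l l ≤ N * B l l ≤ N²` bounds every structure constant of the module, so up to
relabelling the basis there are only finitely many irreducible modules.
-/

namespace Matrix

variable {L : Type} [Fintype L] {B : Matrix L L ℕ} {N : ℕ}

theorem card_le_of_mul_self_le (hpos : ∀ l m, 1 ≤ B l m) (hsq : ∀ l m, (B * B) l m ≤ N * B l m) :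
    Fintype.card L ≤ N := by
  cases isEmpty_or_nonempty L
  · simp
  obtain ⟨⟨l, m⟩, hmin⟩ := Finite.exists_min fun p : L × L => B p.1 p.2
  have : Fintype.card L * B l m ≤ N * B l m :=
    calc Fintype.card L * B l m = ∑ k, 1 * B l m := by simp
      _ ≤ ∑ k, B l k * B k m :=
        Finset.sum_le_sum fun k _ => Nat.mul_le_mul (hpos l k) (hmin (k, m))
      _ ≤ N * B l m := hsq l m
  exact Nat.le_of_mul_le_mul_right this (hpos l m)

theorem le_mul_self_of_mul_self_le (hpos : ∀ l m, 1 ≤ B l m)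
    (hsq : ∀ l m, (B * B) l m ≤ N * B l m) (l m : L) : B l m ≤ N * N := by
  have hdiag : B l l ≤ N := by
    refine Nat.le_of_mul_le_mul_right ?_ (hpos l l)
    calc B l l * B l l ≤ (B * B) l l :=
          mul_apply (M := B) ▸ Finset.single_le_sum (f := fun k => B l k * B k l)
            (fun _ _ => Nat.zero_le _) (Finset.mem_univ l)
      _ ≤ N * B l l := hsq l l
  calc B l m ≤ B l m * B m l := Nat.le_mul_of_pos_right _ (hpos m l)
    _ ≤ (B * B) l l :=
        mul_apply (M := B) ▸ Finset.single_le_sum (f := fun k => B l k * B k l)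
          (fun _ _ => Nat.zero_le _) (Finset.mem_univ m)
    _ ≤ N * B l l := hsq l l
    _ ≤ N * N := Nat.mul_le_mul_left N hdiag

end Matrix

def WeakBasedRing.maxCoeffBSq {I : Type} [Fintype I] [DecidableEq I] (A : WeakBasedRing I) : ℕ :=
  univ.sup fun l => ∑ i1, ∑ i2, A.c i1 i2 l

namespace ZPlusModule

variable {I : Type} [Fintype I] [DecidableEq I] {A : WeakBasedRing I}
  {L : Type} [Fintype L] [DecidableEq L] (M : ZPlusModule A L)

theorem ext {M₁ M₂ : ZPlusModule A L} (h : M₁.f = M₂.f) : M₁ = M₂ := by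
  cases M₁; cases M₂; cases h; rfl

/-- The matrix of right multiplication by `b = ∑ i, b_i`. -/
def bMatrix : Matrix L L ℕ := fun l m => ∑ i, M.f l i m

theorem bMatrix_mul_self_apply (l m : L) :
    (M.bMatrix * M.bMatrix) l m = ∑ t, (∑ i1, ∑ i2, A.c i1 i2 t) * M.f l t m := by
  calc (M.bMatrix * M.bMatrix) l m = ∑ k, ∑ i, ∑ j, M.f l i k * M.f k j m := by
        simp only [Matrix.mul_apply, bMatrix, Finset.sum_mul_sum]
    _ = ∑ i, ∑ j, ∑ k, M.f l i k * M.f k j m := Finset.sum_comm_cycle.symm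
    _ = ∑ i, ∑ j, ∑ t, A.c i j t * M.f l t m := by simp only [M.assoc]
    _ = ∑ t, ∑ i, ∑ j, A.c i j t * M.f l t m := Finset.sum_comm_cycle
    _ = ∑ t, (∑ i1, ∑ i2, A.c i1 i2 t) * M.f l t m := by simp only [Finset.sum_mul]

theorem bMatrix_mul_self_le (l m : L) :
    (M.bMatrix * M.bMatrix) l m ≤ A.maxCoeffBSq * M.bMatrix l m := by
  rw [bMatrix_mul_self_apply, bMatrix, Finset.mul_sum]
  exact Finset.sum_le_sum fun t _ =>
    Nat.mul_le_mul_right _ (Finset.le_sup (f := fun t => ∑ i1, ∑ i2, A.c i1 i2 t) (mem_univ t))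

theorem exists_f_self_ne_zero (l : L) : ∃ i, M.f l i l ≠ 0 := by
  by_contra! h
  simpa [h] using M.unit l l

theorem exists_f_ne_zero_of_f_ne_zero {l x m : L} {i j : I} (h₁ : M.f l i x ≠ 0)
    (h₂ : M.f x j m ≠ 0) : ∃ y, M.f l y m ≠ 0 := by
  by_contra! h
  have : ∑ x, M.f l i x * M.f x j m = 0 := by simp [M.assoc, h]
  exact Nat.mul_ne_zero h₁ h₂ (Finset.sum_eq_zero_iff.1 this x (mem_univ x))

variable {M}

theorem Irreducible.one_le_bMatrix (hM : M.Irreducible) (l m : L) : 1 ≤ M.bMatrix l m := by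
  -- The basis vectors occurring in the `m_l b_i` span a submodule containing `m_l`.
  let S : Finset L := univ.filter fun x => ∃ i, M.f l i x ≠ 0
  have hS : S = univ := hM S ⟨l, by simpa [S] using M.exists_f_self_ne_zero l⟩
    fun x hx j y hy => by
      obtain ⟨i, hi⟩ := (mem_filter.1 hx).2
      simpa [S] using M.exists_f_ne_zero_of_f_ne_zero hi hy
  obtain ⟨i, hi⟩ := (mem_filter.1 (hS ▸ mem_univ m : m ∈ S)).2
  exact (Nat.one_le_iff_ne_zero.2 hi).trans
    (Finset.single_le_sum (f := fun i => M.f l i m) (fun _ _ => Nat.zero_le _) (mem_univ i))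

theorem Irreducible.card_le (hM : M.Irreducible) : Fintype.card L ≤ A.maxCoeffBSq :=
  Matrix.card_le_of_mul_self_le hM.one_le_bMatrix M.bMatrix_mul_self_le

theorem Irreducible.f_le (hM : M.Irreducible) (l : L) (i : I) (m : L) :
    M.f l i m ≤ A.maxCoeffBSq * A.maxCoeffBSq :=
  (Finset.single_le_sum (f := fun i => M.f l i m) (fun _ _ => Nat.zero_le _) (mem_univ i)).trans
    (Matrix.le_mul_self_of_mul_self_le hM.one_le_bMatrix M.bMatrix_mul_self_le l m)

variable {L' : Type} [Fintype L'] [DecidableEq L']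

def relabel (M : ZPlusModule A L) (e : L ≃ L') : ZPlusModule A L' where
  f x i y := M.f (e.symm x) i (e.symm y)
  unit l m := by simp [M.unit]
  assoc l i j m := by
    rw [← M.assoc]
    exact Fintype.sum_equiv e.symm _ _ fun _ => rfl

@[simp]
theorem relabel_f (e : L ≃ L') (x : L') (i : I) (y : L') :
    (M.relabel e).f x i y = M.f (e.symm x) i (e.symm y) := rfl

end ZPlusModule

theorem finite_setOf_zPlusModule_bounded {I : Type} [Fintype I] [DecidableEq I]
    (A : WeakBasedRing I) (N K : ℕ) :
    {p : Σ r : ℕ, ZPlusModule A (Fin r) | p.1 ≤ N ∧ ∀ l i m, p.2.f l i m ≤ K}.Finite := by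
  have hfun (r : ℕ) : {g : Fin r → I → Fin r → ℕ | ∀ l i m, g l i m ≤ K}.Finite := by
    convert Set.Finite.pi fun _ : Fin r => Set.Finite.pi fun _ : I =>
      Set.Finite.pi fun _ : Fin r => Set.finite_Iic K
    ext; simp [Pi.le_def]
  refine ((Set.finite_Iic N).biUnion fun r _ =>
    ((hfun r).preimage (f := ZPlusModule.f (A := A)) fun _ _ _ _ h =>
      ZPlusModule.ext h).image (Sigma.mk r)).subset ?_
  rintro ⟨r, M⟩ ⟨hr, hM⟩
  exact Set.mem_biUnion hr ⟨M, hM, rfl⟩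

/-- Every irreducible `ℤ₊`-module over a weak based ring `A` of finite rank has rank bounded
by `N`, the maximum coefficient in the expansion of `b²` (where `b` is the sum of all basis
elements of `A`), and there are only finitely many equivalence classes of irreducible
`ℤ₊`-modules over `A`. -/
theorem stmt_1 {I : Type} [Fintype I] [DecidableEq I] (A : WeakBasedRing I) :
    (∀ (L : Type) [Fintype L] [DecidableEq L] (M : ZPlusModule A L), M.Irreducible →
      Fintype.card L ≤ univ.sup fun l => ∑ i1, ∑ i2, A.c i1 i2 l) ∧
    ∃ (n : ℕ) (reps : Fin n → Σ r : ℕ, ZPlusModule A (Fin r)),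
      ∀ (L : Type) [Fintype L] [DecidableEq L] (M : ZPlusModule A L), M.Irreducible →
        ∃ (t : Fin n) (e : L ≃ Fin (reps t).1),
          ∀ l i m, (reps t).2.f (e l) i (e m) = M.f l i m := by
  refine ⟨fun L _ _ M hM => hM.card_le, ?_⟩
  have hfin := finite_setOf_zPlusModule_bounded A A.maxCoeffBSq (A.maxCoeffBSq * A.maxCoeffBSq)
  obtain ⟨n, ⟨enum⟩⟩ := @Finite.exists_equiv_fin _ hfin.to_subtype
  refine ⟨n, fun t => (enum.symm t).1, fun L _ _ M hM => ?_⟩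
  let e := Fintype.equivFin L
  obtain ⟨t, ht⟩ : ∃ t, (enum.symm t).1 = ⟨_, M.relabel e⟩ :=
    ⟨enum ⟨⟨_, M.relabel e⟩, hM.card_le, fun l i m => hM.f_le _ i _⟩, by simp⟩
  refine ⟨t, ?_⟩
  beta_reduce
  rw [ht]
  exact ⟨e, fun l i m => by simp⟩
end

section
/- Let k ⊆ K be algebraically closed fields, let f₁,...,f_m ∈ k[x₁,...,x_n], and let V_k ⊆ k^n and V_K ⊆ K^n be their common vanishing sets. If a polynomial g ∈ K[x₁,...,x_n] vanishes on V_k (viewed inside K^n), then g vanishes on V_K. Equivalently, V_k is Zariski dense in V_K. -/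
/-!
A polynomial over `k` that vanishes on `V_k` lies in the radical of the ideal of the `fᵢ` by the
Nullstellensatz, and therefore vanishes on `V_K`. A polynomial `g` over `K` is reduced to this
case by expanding its coefficients in a `k`-basis `(e_b)` of `K`: `g = ∑ e_b • g_b` with `g_b`
over `k`, and at a point of `kⁿ` the values `g_b(p)` are the coordinates of `g(p)`, so every
`g_b` vanishes on `V_k`.
-/

open MvPolynomial

namespace MvPolynomial

section basisCoeff

variable {σ ι k K : Type*} [CommSemiring k] [CommSemiring K] [Algebra k K]
  (B : Module.Basis ι k K)

noncomputable def basisCoeff (b : ι) (g : MvPolynomial σ K) : MvPolynomial σ k :=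
  AddMonoidAlgebra.map (B.coord b).toAddMonoidHom g

@[simp]
theorem coeff_basisCoeff (b : ι) (g : MvPolynomial σ K) (d : σ →₀ ℕ) :
    coeff d (basisCoeff B b g) = B.repr (coeff d g) b :=
  rfl

theorem basisCoeff_monomial (b : ι) (d : σ →₀ ℕ) (c : K) :
    basisCoeff B b (monomial d c) = monomial d (B.repr c b) :=
  AddMonoidAlgebra.map_single ..

theorem basisCoeff_add (b : ι) (g h : MvPolynomial σ K) :
    basisCoeff B b (g + h) = basisCoeff B b g + basisCoeff B b h :=
  AddMonoidAlgebra.map_add ..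

theorem repr_eval_algebraMap (b : ι) (g : MvPolynomial σ K) (p : σ → k) :
    B.repr (eval (fun x => algebraMap k K (p x)) g) b = eval p (basisCoeff B b g) := by
  induction g using MvPolynomial.induction_on' with
  | monomial d c =>
    simp only [basisCoeff_monomial, eval_monomial, ← map_pow, ← map_finsuppProd,
      ← Algebra.smul_def, mul_comm c, map_smul]
    exact mul_comm ..
  | add g h hg hh => simp only [map_add, Finsupp.add_apply, hg, hh, basisCoeff_add]

theorem sum_C_mul_map_basisCoeff [DecidableEq ι] (g : MvPolynomial σ K) :
    ∑ b ∈ g.support.biUnion (fun d => (B.repr (coeff d g)).support),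
      C (B b) * map (algebraMap k K) (basisCoeff B b g) = g := by
  ext d
  simp only [coeff_sum, coeff_C_mul, coeff_map, coeff_basisCoeff, mul_comm (B _),
    ← Algebra.smul_def]
  conv_rhs => rw [← B.linearCombination_repr (coeff d g), Finsupp.linearCombination_apply]
  refine (Finset.sum_subset ?_ fun b _ hb => ?_).symm
  · by_cases hd : d ∈ g.support
    · exact Finset.subset_biUnion_of_mem (fun d => (B.repr (coeff d g)).support) hd
    · simp [notMem_support_iff.mp hd]
  · simp [Finsupp.notMem_support_iff.mp hb]

end basisCoeff

variable {σ k K : Type*} [Field k] [Field K] [Algebra k K]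

theorem mem_zeroLocus_span_range_iff {ι : Type*} {f : ι → MvPolynomial σ k} {x : σ → K} :
    x ∈ zeroLocus K (Ideal.span (Set.range f)) ↔ ∀ i, aeval x (f i) = 0 := by
  simp [zeroLocus_span]

variable [IsAlgClosed k] [Finite σ]

theorem vanishingIdeal_zeroLocus_le_vanishingIdeal_zeroLocus_of_isAlgClosed
    (I : Ideal (MvPolynomial σ k)) :
    vanishingIdeal k (zeroLocus k I) ≤ vanishingIdeal k (zeroLocus K I) := by
  rw [vanishingIdeal_zeroLocus_eq_radical]
  exact radical_le_vanishingIdeal_zeroLocus I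

theorem eval_eq_zero_of_forall_mem_zeroLocus_eval_algebraMap_eq_zero
    {I : Ideal (MvPolynomial σ k)} {g : MvPolynomial σ K}
    (hg : ∀ p ∈ zeroLocus k I, eval (fun x => algebraMap k K (p x)) g = 0)
    {q : σ → K} (hq : q ∈ zeroLocus K I) : eval q g = 0 := by
  classical
  let B := Module.Basis.ofVectorSpace k K
  have hcoeff (b) : basisCoeff B b g ∈ vanishingIdeal k (zeroLocus K I) := by
    refine vanishingIdeal_zeroLocus_le_vanishingIdeal_zeroLocus_of_isAlgClosed I
      (mem_vanishingIdeal_iff.2 fun p hp => ?_)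
    rw [aeval_eq_eval, ← repr_eval_algebraMap, hg p hp, map_zero, Finsupp.zero_apply]
  rw [← sum_C_mul_map_basisCoeff B g, map_sum]
  refine Finset.sum_eq_zero fun b _ => ?_
  rw [eval_mul, eval_map, ← aeval_def, mem_vanishingIdeal_iff.1 (hcoeff b) q hq, mul_zero]

end MvPolynomial

theorem stmt_3_general (k K : Type*) [Field k] [Field K] [IsAlgClosed k]
    [Algebra k K] (n m : ℕ) (f : Fin m → MvPolynomial (Fin n) k)
    (g : MvPolynomial (Fin n) K)
    (hg : ∀ p : Fin n → k, (∀ i, eval p (f i) = 0) →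
      eval (fun x => algebraMap k K (p x)) g = 0) :
    ∀ q : Fin n → K, (∀ i, eval q (map (algebraMap k K) (f i)) = 0) → eval q g = 0 := by
  intro q hq
  refine eval_eq_zero_of_forall_mem_zeroLocus_eval_algebraMap_eq_zero
    (I := Ideal.span (Set.range f)) (fun p hp => hg p fun i => ?_) ?_
  · simpa using mem_zeroLocus_span_range_iff.1 hp i
  · exact mem_zeroLocus_span_range_iff.2 fun i => by rw [aeval_def, ← eval_map]; exact hq i

/-- Let `k ⊆ K` be algebraically closed fields, `f 1, ..., f m ∈ k[x₁,...,xₙ]`, with common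
vanishing sets `V_k ⊆ kⁿ` and `V_K ⊆ Kⁿ`.  If a polynomial `g ∈ K[x₁,...,xₙ]` vanishes on
`V_k` (viewed inside `Kⁿ`), then `g` vanishes on `V_K`; i.e. `V_k` is Zariski dense in `V_K`. -/
theorem stmt_3 (k K : Type*) [Field k] [Field K] [IsAlgClosed k] [IsAlgClosed K]
    [Algebra k K] (n m : ℕ) (f : Fin m → MvPolynomial (Fin n) k)
    (g : MvPolynomial (Fin n) K)
    (hg : ∀ p : Fin n → k, (∀ i, eval p (f i) = 0) →
      eval (fun x => algebraMap k K (p x)) g = 0) :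
    ∀ q : Fin n → K, (∀ i, eval q (map (algebraMap k K) (f i)) = 0) → eval q g = 0 :=
  stmt_3_general k K n m f g hg
end

section
/- Let k ⊆ K be algebraically closed fields, f₁,...,f_m ∈ k[x₁,...,x_n], and suppose g ∈ K[x₁,...,x_n] does not vanish identically on the vanishing set V_K of the f_i in K^n. Then g does not vanish identically on V_k, the vanishing set of the f_i in k^n. (Key step: if A is a finitely generated k-subalgebra of K and 𝔪 ⊆ A is a maximal ideal, then A/𝔪 ≅ k.) -/
/-!
Expand the coefficients of `g` in a `k`-basis `(b l)` of `K`, so that `g = ∑ b l • g l` with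
coordinate polynomials `g l ∈ k[x]`. Evaluating at a `k`-point commutes with taking coordinates,
so if `g` vanished on `V_k` every `g l` would too. By the Nullstellensatz over `k`, some power of
`g l` then lies in the ideal generated by the `f i`, hence `g l` vanishes at every point of `V_K`,
and so does `g`.
-/

open MvPolynomial

namespace MvPolynomial

section BasisCoord

variable {σ R A ι : Type*} [CommRing R] [CommRing A] [Algebra R A] (b : Module.Basis ι R A)

noncomputable def basisCoord (p : MvPolynomial σ A) (i : ι) : MvPolynomial σ R :=
  ∑ d ∈ p.support, monomial d (b.repr (p.coeff d) i)

theorem coeff_basisCoord (p : MvPolynomial σ A) (i : ι) (d : σ →₀ ℕ) :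
    (basisCoord b p i).coeff d = b.repr (p.coeff d) i := by
  classical
  rw [basisCoord, coeff_sum]
  simp only [coeff_monomial, Finset.sum_ite_eq', mem_support_iff]
  split_ifs with hd
  · rfl
  · rw [not_not.mp hd, map_zero, Finsupp.zero_apply]

theorem eval_basisCoord (p : MvPolynomial σ A) (i : ι) (x : σ → R) :
    eval x (basisCoord b p i) = b.repr (eval (algebraMap R A ∘ x) p) i := by
  rw [eval_eq (algebraMap R A ∘ x), basisCoord, map_sum, map_sum, Finsupp.finsetSum_apply]
  refine Finset.sum_congr rfl fun d _ => ?_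
  simp only [eval_monomial, Finsupp.prod, Function.comp_apply, ← map_pow, ← map_prod,
    mul_comm (p.coeff d), ← Algebra.smul_def, map_smul, Finsupp.smul_apply, smul_eq_mul]
  ring

variable [DecidableEq ι]

noncomputable def basisCoordSupport (p : MvPolynomial σ A) : Finset ι :=
  p.support.biUnion fun d => (b.repr (p.coeff d)).support

theorem sum_basisCoord (p : MvPolynomial σ A) :
    ∑ i ∈ basisCoordSupport b p, C (b i) * map (algebraMap R A) (basisCoord b p i) = p := by
  ext d
  simp only [coeff_sum, coeff_C_mul, coeff_map, coeff_basisCoord]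
  by_cases hd : d ∈ p.support
  · conv_rhs => rw [← b.linearCombination_repr (p.coeff d)]
    rw [Finsupp.linearCombination_apply, Finsupp.sum_of_support_subset (b.repr (p.coeff d))
      (Finset.subset_biUnion_of_mem (fun d => (b.repr (p.coeff d)).support) hd) _
      (fun i _ => zero_smul R (b i))]
    exact Finset.sum_congr rfl fun i _ => by rw [Algebra.smul_def, mul_comm]
  · rw [notMem_support_iff.mp hd]
    simp

theorem eval_eq_sum_basisCoord (p : MvPolynomial σ A) (q : σ → A) :
    eval q p = ∑ i ∈ basisCoordSupport b p, b i * aeval q (basisCoord b p i) := by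
  conv_lhs => rw [← sum_basisCoord b p]
  simp only [map_sum, map_mul, eval_C, eval_map, aeval_def]

end BasisCoord

theorem aeval_eq_zero_of_forall_mem_zeroLocus {σ k A : Type*} [Field k] [IsAlgClosed k]
    [Finite σ] [CommRing A] [Algebra k A] [IsReduced A] {I : Ideal (MvPolynomial σ k)}
    {p : MvPolynomial σ k} (hp : ∀ x ∈ zeroLocus k I, eval x p = 0) {q : σ → A}
    (hq : ∀ r ∈ I, aeval q r = 0) : aeval q p = 0 := by
  have hrad : p ∈ I.radical := by
    rw [← vanishingIdeal_zeroLocus_eq_radical (K := k)]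
    exact hp
  obtain ⟨N, hN⟩ := hrad
  exact IsNilpotent.eq_zero ⟨N, by rw [← map_pow]; exact hq _ hN⟩

end MvPolynomial

theorem stmt_4_general (k K : Type*) [Field k] [Field K] [IsAlgClosed k]
    [Algebra k K] (n m : ℕ) (f : Fin m → MvPolynomial (Fin n) k)
    (g : MvPolynomial (Fin n) K)
    (hg : ∃ q : Fin n → K, (∀ i, eval q (map (algebraMap k K) (f i)) = 0) ∧ eval q g ≠ 0) :
    ∃ p : Fin n → k, (∀ i, eval p (f i) = 0) ∧
      eval (fun x => algebraMap k K (p x)) g ≠ 0 := by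
  classical
  obtain ⟨q, hqf, hgq⟩ := hg
  by_contra! hg_Vk
  set I := Ideal.span (Set.range f)
  have hI_q : ∀ r ∈ I, aeval q r = 0 := by
    have hI_ker : I ≤ RingHom.ker (aeval q) :=
      Ideal.span_le.mpr <| Set.range_subset_iff.mpr fun i => by
        rw [SetLike.mem_coe, RingHom.mem_ker, aeval_def, ← eval_map]
        exact hqf i
    exact fun r hr => hI_ker hr
  let b := Module.Basis.ofVectorSpace k K
  have hcoord_Vk (l) (x) (hx : x ∈ zeroLocus k I) : eval x (basisCoord b g l) = 0 := by
    rw [zeroLocus_span] at hx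
    rw [eval_basisCoord, Function.comp_def, hg_Vk x fun i => hx _ ⟨i, rfl⟩, map_zero,
      Finsupp.zero_apply]
  have hcoord_q (l) : aeval q (basisCoord b g l) = 0 :=
    aeval_eq_zero_of_forall_mem_zeroLocus (hcoord_Vk l) hI_q
  refine hgq ?_
  rw [eval_eq_sum_basisCoord b]
  exact Finset.sum_eq_zero fun l _ => by rw [hcoord_q, mul_zero]

/-- Let `k ⊆ K` be algebraically closed fields, `f 1, ..., f m ∈ k[x₁,...,xₙ]`, and suppose
`g ∈ K[x₁,...,xₙ]` does not vanish identically on the vanishing set `V_K` of the `f i` in `Kⁿ`.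
Then `g` does not vanish identically on `V_k`, the vanishing set of the `f i` in `kⁿ`. -/
theorem stmt_4 (k K : Type*) [Field k] [Field K] [IsAlgClosed k] [IsAlgClosed K]
    [Algebra k K] (n m : ℕ) (f : Fin m → MvPolynomial (Fin n) k)
    (g : MvPolynomial (Fin n) K)
    (hg : ∃ q : Fin n → K, (∀ i, eval q (map (algebraMap k K) (f i)) = 0) ∧ eval q g ≠ 0) :
    ∃ p : Fin n → k, (∀ i, eval p (f i) = 0) ∧
      eval (fun x => algebraMap k K (p x)) g ≠ 0 :=
  stmt_4_general k K n m f g hg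
end

section
/- Let k be a field and A a separable (finite-dimensional) k-algebra, i.e., A is projective as an A ⊗_k A^op-module, with multiplication map m : A ⊗ A → A admitting an A-A-bimodule section Δ. Then for any A-module M, the action map A ⊗_k M → M admits an A-module section, namely (Δ ⊗ id_M) followed by the evaluation; consequently every A-module is a direct summand of a free-type module A ⊗_k M and is projective, so A is a semisimple algebra. -/
/-!
Write `Δ 1 = ∑ xᵢ ⊗ yᵢ`. The bimodule property gives `∑ a xᵢ ⊗ yᵢ = Δ a = ∑ xᵢ ⊗ yᵢ a`, and
`∑ xᵢ yᵢ = 1`. Hence `s v = ∑ xᵢ ⊗ yᵢ v` is an `A`-linear section of the action map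
`A ⊗[k] M → M`, so every `A`-module is a direct summand of the free `A`-module `A ⊗[k] M`.
In particular every quotient of `A` is projective, so every left ideal is a direct summand.
-/

open scoped TensorProduct

/-- The action map `A ⊗[k] M →ₗ[k] M`, `a ⊗ v ↦ a • v`, of an `A`-module `M`. -/
noncomputable def actionMap (k A M : Type) [Field k] [Ring A] [Algebra k A]
    [AddCommGroup M] [Module k M] [Module A M] [IsScalarTower k A M] :
    A ⊗[k] M →ₗ[k] M :=
  TensorProduct.lift (LinearMap.mk₂ k (fun a v => a • v)
    (fun a b v => add_smul a b v)
    (fun c a v => smul_assoc c a v)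
    (fun a v w => smul_add a v w)
    (fun c a v => by rw [smul_comm]))

open TensorProduct LinearMap

theorem isSemisimpleModule_of_forall_projective_quotient {R M : Type*} [Ring R]
    [AddCommGroup M] [Module R M] (h : ∀ N : Submodule R M, Module.Projective R (M ⧸ N)) :
    IsSemisimpleModule R M := by
  refine (isSemisimpleModule_iff R M).mpr ⟨fun N => ?_⟩
  obtain ⟨σ, hσ⟩ := Module.projective_lifting_property N.mkQ LinearMap.id N.mkQ_surjective
  have hσ_injective : Function.Injective σ :=
    Function.LeftInverse.injective (LinearMap.congr_fun hσ)
  have hidem : IsIdempotentElem (σ ∘ₗ N.mkQ) := by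
    rw [IsIdempotentElem, Module.End.mul_eq_comp, comp_assoc, ← comp_assoc N.mkQ, hσ, id_comp]
  refine ⟨range (σ ∘ₗ N.mkQ), ?_⟩
  simpa [ker_comp, ker_eq_bot_of_injective hσ_injective] using hidem.isCompl.symm

theorem map_mulLeft_id_apply {k A M : Type*} [CommSemiring k] [Semiring A] [Algebra k A]
    [AddCommMonoid M] [Module k M] (a : A) (t : A ⊗[k] M) :
    map (mulLeft k a) LinearMap.id t = a • t := by
  induction t using TensorProduct.induction_on with
  | zero => simp
  | tmul x v => simp [smul_tmul']
  | add t₁ t₂ h₁ h₂ => simp [h₁, h₂]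

section ActionMap

variable {k A M : Type} [Field k] [Ring A] [Algebra k A]
  [AddCommGroup M] [Module k M] [Module A M] [IsScalarTower k A M]

@[simp]
theorem actionMap_tmul (a : A) (v : M) : actionMap k A M (a ⊗ₜ v) = a • v := rfl

theorem actionMap_smul (a : A) (t : A ⊗[k] M) :
    actionMap k A M (a • t) = a • actionMap k A M t := by
  induction t using TensorProduct.induction_on with
  | zero => simp
  | tmul x v => simp [smul_tmul', mul_smul]
  | add t₁ t₂ h₁ h₂ => simp [h₁, h₂]

variable (k A M) in
noncomputable def actionLinearMap : A ⊗[k] M →ₗ[A] M where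
  toFun := actionMap k A M
  map_add' := map_add _
  map_smul' := actionMap_smul

variable (k A M) in
/-- `v ↦ rightAct k A M (Δ 1) v` is the map `(Δ ⊗ id_M)` followed by evaluation. -/
noncomputable def rightAct : A ⊗[k] A →ₗ[k] M →ₗ[k] A ⊗[k] M :=
  (mk k (A ⊗[k] A) M).compr₂
    ((actionMap k A M).lTensor A ∘ₗ (TensorProduct.assoc k A A M).toLinearMap)

@[simp]
theorem rightAct_tmul (x y : A) (v : M) : rightAct k A M (x ⊗ₜ y) v = x ⊗ₜ (y • v) := by
  simp [rightAct]

theorem rightAct_map_id_mulRight (a : A) (t : A ⊗[k] A) (v : M) :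
    rightAct k A M (map LinearMap.id (mulRight k a) t) v = rightAct k A M t (a • v) := by
  induction t using TensorProduct.induction_on with
  | zero => simp
  | tmul x y => simp [mul_smul]
  | add t₁ t₂ h₁ h₂ => simp [h₁, h₂]

theorem rightAct_map_mulLeft_id (a : A) (t : A ⊗[k] A) (v : M) :
    rightAct k A M (map (mulLeft k a) LinearMap.id t) v =
      map (mulLeft k a) LinearMap.id (rightAct k A M t v) := by
  induction t using TensorProduct.induction_on with
  | zero => simp
  | tmul x y => simp
  | add t₁ t₂ h₁ h₂ => simp [h₁, h₂]

theorem actionMap_rightAct (t : A ⊗[k] A) (v : M) :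
    actionMap k A M (rightAct k A M t v) = mul' k A t • v := by
  induction t using TensorProduct.induction_on with
  | zero => simp
  | tmul x y => simp [mul_smul]
  | add t₁ t₂ h₁ h₂ => simp [h₁, h₂, add_smul]

theorem Module.Projective.of_section_actionMap {s : M →ₗ[k] A ⊗[k] M}
    (hs_smul : ∀ (a : A) (v : M), s (a • v) = map (mulLeft k a) LinearMap.id (s v))
    (hs_section : ∀ v : M, actionMap k A M (s v) = v) :
    Module.Projective A M :=
  let sA : M →ₗ[A] A ⊗[k] M :=
    { toFun := s
      map_add' := map_add s
      map_smul' := fun a v => by rw [RingHom.id_apply, hs_smul, map_mulLeft_id_apply] }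
  .of_split sA (actionLinearMap k A M) (LinearMap.ext hs_section)

end ActionMap

section Separable

variable {k A : Type} [Field k] [Ring A] [Algebra k A] {Δ : A →ₗ[k] A ⊗[k] A}

theorem map_mulLeft_id_apply_one_eq_map_id_mulRight
    (hbimod : ∀ a b x : A, Δ (a * x * b) = map (mulLeft k a) (mulRight k b) (Δ x)) (a : A) :
    map (mulLeft k a) LinearMap.id (Δ 1) = map LinearMap.id (mulRight k a) (Δ 1) := by
  have hleft := hbimod a 1 1
  have hright := hbimod 1 a 1
  simp only [mul_one, one_mul, mulRight_one, mulLeft_one] at hleft hright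
  rw [← hleft, ← hright]

theorem exists_section_actionMap (hsec : ∀ x : A, mul' k A (Δ x) = x)
    (hbimod : ∀ a b x : A, Δ (a * x * b) = map (mulLeft k a) (mulRight k b) (Δ x))
    (M : Type) [AddCommGroup M] [Module k M] [Module A M] [IsScalarTower k A M] :
    ∃ s : M →ₗ[k] A ⊗[k] M,
      (∀ (a : A) (v : M), s (a • v) = map (mulLeft k a) LinearMap.id (s v)) ∧
      ∀ v : M, actionMap k A M (s v) = v := by
  refine ⟨rightAct k A M (Δ 1), fun a v => ?_, fun v => ?_⟩
  · rw [← rightAct_map_mulLeft_id, map_mulLeft_id_apply_one_eq_map_id_mulRight hbimod,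
      rightAct_map_id_mulRight]
  · rw [actionMap_rightAct, hsec, one_smul]

theorem projective_of_separable (hsec : ∀ x : A, mul' k A (Δ x) = x)
    (hbimod : ∀ a b x : A, Δ (a * x * b) = map (mulLeft k a) (mulRight k b) (Δ x))
    (M : Type) [AddCommGroup M] [Module A M] : Module.Projective A M := by
  let _ : Module k M := Module.compHom M (algebraMap k A)
  have : IsScalarTower k A M := IsScalarTower.of_algebraMap_smul fun _ _ => rfl
  obtain ⟨s, hs_smul, hs_section⟩ := exists_section_actionMap hsec hbimod M
  exact .of_section_actionMap hs_smul hs_section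

end Separable

theorem stmt_19_general (k A : Type) [Field k] [Ring A] [Algebra k A]
    (Δ : A →ₗ[k] A ⊗[k] A)
    (hsec : ∀ x : A, (LinearMap.mul' k A) (Δ x) = x)
    (hbimod : ∀ a b x : A, Δ (a * x * b) =
      TensorProduct.map (LinearMap.mulLeft k a) (LinearMap.mulRight k b) (Δ x)) :
    (∀ (M : Type) [AddCommGroup M] [Module k M] [Module A M] [IsScalarTower k A M],
      ∃ s : M →ₗ[k] A ⊗[k] M,
        (∀ (a : A) (v : M),
          s (a • v) = TensorProduct.map (LinearMap.mulLeft k a) LinearMap.id (s v)) ∧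
        ∀ v : M, actionMap k A M (s v) = v) ∧
    (∀ (M : Type) [AddCommGroup M] [Module A M], Module.Projective A M) ∧
    IsSemisimpleRing A :=
  ⟨exists_section_actionMap hsec hbimod, projective_of_separable hsec hbimod,
    isSemisimpleModule_of_forall_projective_quotient fun N =>
      projective_of_separable hsec hbimod (A ⧸ N)⟩

/-- If `A` is a separable finite-dimensional `k`-algebra, i.e. the multiplication
`m : A ⊗ A → A` admits an `A`-`A`-bimodule section `Δ`, then for any `A`-module `M` the action
map `A ⊗[k] M → M` admits an `A`-linear section (namely `(Δ ⊗ id_M)` followed by evaluation);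
consequently every `A`-module is projective, so `A` is a semisimple algebra. -/
theorem stmt_19 (k A : Type) [Field k] [Ring A] [Algebra k A] [FiniteDimensional k A]
    (Δ : A →ₗ[k] A ⊗[k] A)
    (hsec : ∀ x : A, (LinearMap.mul' k A) (Δ x) = x)
    (hbimod : ∀ a b x : A, Δ (a * x * b) =
      TensorProduct.map (LinearMap.mulLeft k a) (LinearMap.mulRight k b) (Δ x)) :
    (∀ (M : Type) [AddCommGroup M] [Module k M] [Module A M] [IsScalarTower k A M],
      ∃ s : M →ₗ[k] A ⊗[k] M,
        (∀ (a : A) (v : M),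
          s (a • v) = TensorProduct.map (LinearMap.mulLeft k a) LinearMap.id (s v)) ∧
        ∀ v : M, actionMap k A M (s v) = v) ∧
    (∀ (M : Type) [AddCommGroup M] [Module A M], Module.Projective A M) ∧
    IsSemisimpleRing A :=
  stmt_19_general k A Δ hsec hbimod
end
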